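/- arXiv:math/0503402 — 3 statements merged into one kernel-verified Lean document; each statement's English description precedes it below -/
import Mathlib

section
/- The involution ι of L(V), induced by ι(α₁⊗⋯⊗α_l) = (−1)^l α_l⊗⋯⊗α₁ on V^⊗l, is a Lie algebra involution: it is well defined on coinvariants and satisfies [ι(ᾱ), ι(β̄)] = ι([ᾱ, β̄]) for all ᾱ, β̄ ∈ L(V). -/
/-!
Statement 0: the bracket
`[α, β] = Σᵢ Σⱼ ⟨αᵢ, βⱼ⟩ • class (D_{i,i}(α) ⊗ D_{j,j}(β))`
on basis monomials descends to a well-defined bilinear map on cyclic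
coinvariants, and the resulting bracket on `L(V) = ⊕_{l≥2} (V^⊗l)_{ℤ/l}`
does not depend on the choice of basis.
-/

open scoped TensorProduct DirectSum

noncomputable section

variable (K : Type*) [Field K] (V : Type*) [AddCommGroup V] [Module K V]

/-- The `l`-th tensor power of `V`. -/
abbrev TP (l : ℕ) : Type _ := ⨂[K] (_ : Fin l), V

/-- The cyclic shift `σ` (generator of `ℤ/lℤ`) on the `l`-th tensor power:
it permutes the tensor factors cyclically. -/
def cyc (l : ℕ) : TP K V l ≃ₗ[K] TP K V l :=
  PiTensorProduct.reindex K (fun _ : Fin l => V) (finRotate l)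

/-- The submodule of `V^⊗l` spanned by all `σ(t) - t`; quotienting by it gives
the cyclic coinvariants. -/
def cycRel (l : ℕ) : Submodule K (TP K V l) :=
  Submodule.span K {z | ∃ t : TP K V l, z = cyc K V l t - t}

/-- The space `(V^{⊗l})_{ℤ/lℤ}` of cyclic coinvariants. -/
abbrev Coinv (l : ℕ) : Type _ := TP K V l ⧸ cycRel K V l

/-- The class of a tensor in the coinvariants. -/
def cls {l : ℕ} (t : TP K V l) : Coinv K V l := Submodule.Quotient.mk t

/-- The pure tensor (monomial) `v 0 ⊗ ⋯ ⊗ v (l-1)`. -/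
def mono {l : ℕ} (v : Fin l → V) : TP K V l := PiTensorProduct.tprod K v

/-- `L(V) = ⊕_{l ≥ 2} (V^{⊗l})_{ℤ/lℤ}` (the component of index `l` has tensor
degree `l + 2`). -/
abbrev LV : Type _ := ⨁ l : ℕ, Coinv K V (l + 2)

/-- Inclusion of the degree-`(l+2)` component into `L(V)`. -/
def ofL (l : ℕ) : Coinv K V (l + 2) →ₗ[K] LV K V :=
  DirectSum.lof K ℕ (fun l => Coinv K V (l + 2)) l

/-- The word `D_{i,i}(w) = w_{i+1} ⋯ w_{i-1}` (cyclically, omitting the letter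
`w_i`). -/
def dw {ι : Type*} {n : ℕ} (w : Fin (n + 1) → ι) (i : Fin (n + 1)) : Fin n → ι :=
  fun k => w (i + k.succ)

/-- `IsBracket K V B b Br` says that the bilinear map `Br` on `L(V)` is given, on
classes of monomials in the basis `b`, by the formula
`[α, β] = Σᵢ Σⱼ B(αᵢ, βⱼ) • class (D_{i,i}(α) ⊗ D_{j,j}(β))`. -/
def IsBracket {ι : Type*} (B : V →ₗ[K] V →ₗ[K] K) (b : Module.Basis ι K V)
    (Br : LV K V →ₗ[K] LV K V →ₗ[K] LV K V) : Prop :=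
  ∀ (l m : ℕ) (w : Fin (l + 2) → ι) (u : Fin (m + 2) → ι),
    Br (ofL K V l (cls K V (mono K V fun k => b (w k))))
       (ofL K V m (cls K V (mono K V fun k => b (u k)))) =
    ofL K V (l + m) (∑ i : Fin (l + 2), ∑ j : Fin (m + 2),
      B (b (w i)) (b (u j)) •
        cls K V (mono K V fun k : Fin (l + m + 2) =>
          b (Fin.append (dw w i) (dw u j) (Fin.cast (by omega) k))))

/-- `IsIota K V J` says that `J : L(V) → L(V)` is induced by
`ι(α₁ ⊗ ⋯ ⊗ α_l) = (-1)^l · α_l ⊗ ⋯ ⊗ α₁` on each `(V^{⊗l})_{ℤ/lℤ}`. -/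
def IsIota (J : LV K V →ₗ[K] LV K V) : Prop :=
  ∀ (l : ℕ) (v : Fin (l + 2) → V),
    J (ofL K V l (cls K V (mono K V v))) =
    ofL K V l (((-1 : K) ^ (l + 2)) • cls K V (mono K V (v ∘ Fin.rev)))

-- reversal
def revMap (n : ℕ) : TP K V n ≃ₗ[K] TP K V n :=
  PiTensorProduct.reindex K (fun _ : Fin n => V) Fin.revPerm

lemma revMap_mono (n : ℕ) (v : Fin n → V) :
    revMap K V n (mono K V v) = mono K V (fun k => v k.rev) := by
  simp only [revMap, mono, PiTensorProduct.reindex_tprod]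
  rfl

lemma rot_symm (n : ℕ) (k : Fin (n+1)) : (finRotate (n+1)).symm k = k - 1 := by
  rw [Equiv.symm_apply_eq, finRotate_succ_apply, sub_add_cancel]

lemma cyc_mono (n : ℕ) (v : Fin (n+1) → V) :
    cyc K V (n+1) (mono K V v) = mono K V (fun k => v (k - 1)) := by
  simp only [cyc, mono, PiTensorProduct.reindex_tprod]
  congr 1; funext k; rw [rot_symm]

lemma cls_cyc {n : ℕ} (t : TP K V n) : cls K V (cyc K V n t) = cls K V t :=
  (Submodule.Quotient.eq _).2 (Submodule.subset_span ⟨t, rfl⟩)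

lemma cls_sub_one (n : ℕ) (v : Fin (n+1) → V) :
    cls K V (mono K V fun k => v (k - 1)) = cls K V (mono K V v) := by
  rw [← cyc_mono, cls_cyc]

open Fin.NatCast Fin.CommRing in
lemma cls_shift (n : ℕ) (v : Fin (n+1) → V) (c : ℕ) :
    cls K V (mono K V fun k => v (k - (c : Fin (n+1)))) = cls K V (mono K V v) := by
  induction c with
  | zero => simp
  | succ c ih =>
    have h : (fun k : Fin (n+1) => v (k - ((c+1 : ℕ) : Fin (n+1))))
        = fun k : Fin (n+1) => (fun k' => v (k' - (c : Fin (n+1)))) (k - 1) := by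
      funext k; congr 1; push_cast; ring
    rw [h]
    exact (cls_sub_one K V n (fun k' => v (k' - (c : Fin (n+1))))).trans ih

lemma rev_sub_one (n : ℕ) (i : Fin (n+1)) : i.rev - 1 = (i + 1).rev := by
  cases n with
  | zero => apply Subsingleton.elim (α := Fin 1)
  | succ n =>
    apply Fin.ext
    simp only [Fin.sub_def, Fin.val_rev, Fin.val_add, Fin.val_one]
    have hi := i.isLt
    rcases Nat.lt_or_ge (i.val + 1) (n+2) with h | h
    · rw [Nat.mod_eq_of_lt h, Nat.mod_eq_sub_mod (by omega), Nat.mod_eq_of_lt (by omega)]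
      omega
    · have h2 : i.val = n+1 := by omega
      rw [h2, show n+2 - 1 + (n+2 - (n+1+1)) = n+1 by omega,
        Nat.mod_eq_of_lt (by omega), show n+1+1 = n+2 by omega, Nat.mod_self]
      omega
lemma rev_cyc (n : ℕ) (t : TP K V (n+1)) :
    revMap K V (n+1) (cyc K V (n+1) t) = (cyc K V (n+1)).symm (revMap K V (n+1) t) := by
  have h : (revMap K V (n+1)).toLinearMap ∘ₗ (cyc K V (n+1)).toLinearMap
      = ((cyc K V (n+1)).symm).toLinearMap ∘ₗ (revMap K V (n+1)).toLinearMap := by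
    apply PiTensorProduct.ext
    ext v
    simp only [LinearMap.compMultilinearMap_apply, LinearMap.coe_comp, LinearEquiv.coe_coe,
      Function.comp_apply, cyc, revMap, PiTensorProduct.reindex_tprod,
      PiTensorProduct.reindex_symm]
    congr 1
    funext k
    simp only [Fin.revPerm_symm, Fin.revPerm_apply, Equiv.symm_symm, finRotate_succ_apply]
    rw [rot_symm, Fin.revPerm_apply, Fin.revPerm_apply, rev_sub_one, finRotate_succ_apply]
  exact LinearMap.congr_fun h t

def Smap (n : ℕ) : TP K V n →ₗ[K] TP K V n :=
  ((-1 : K) ^ n) • (revMap K V n).toLinearMap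

lemma Smap_le (n : ℕ) :
    cycRel K V (n+1) ≤ Submodule.comap (Smap K V (n+1)) (cycRel K V (n+1)) := by
  rw [cycRel, Submodule.span_le]
  rintro z ⟨t, rfl⟩
  simp only [SetLike.mem_coe, Submodule.mem_comap, Smap, LinearMap.smul_apply,
    LinearEquiv.coe_coe, map_sub]
  rw [← smul_sub]
  apply Submodule.smul_mem
  rw [rev_cyc]
  set x := revMap K V (n+1) t with hx
  have : (cyc K V (n+1)).symm x - x
      = -(cyc K V (n+1) ((cyc K V (n+1)).symm x) - (cyc K V (n+1)).symm x) := by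
    rw [LinearEquiv.apply_symm_apply]; abel
  rw [this]
  exact neg_mem (Submodule.subset_span ⟨(cyc K V (n+1)).symm x, rfl⟩)

def Jc (l : ℕ) : Coinv K V (l+2) →ₗ[K] Coinv K V (l+2) :=
  Submodule.mapQ _ _ (Smap K V (l+2)) (Smap_le K V (l+1))

lemma Jc_cls (l : ℕ) (t : TP K V (l+2)) :
    Jc K V l (cls K V t) = cls K V (Smap K V (l+2) t) :=
  Submodule.mapQ_apply _ _ _ t

def Jdef : LV K V →ₗ[K] LV K V :=
  DirectSum.toModule K ℕ (LV K V) (fun l => (ofL K V l) ∘ₗ Jc K V l)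

set_option maxHeartbeats 1000000 in
lemma Jdef_apply (l : ℕ) (x : Coinv K V (l+2)) :
    Jdef K V (ofL K V l x) = ofL K V l (Jc K V l x) := by
  exact DirectSum.toModule_lof (φ := fun l => (ofL K V l) ∘ₗ Jc K V l) K l x

lemma Jdef_isIota : IsIota K V (Jdef K V) := by
  intro l v
  rw [Jdef_apply, Jc_cls]
  congr 1
  show cls K V (((-1:K)^(l+2)) • revMap K V (l+2) (mono K V v)) = _
  rw [revMap_mono]
  show Submodule.Quotient.mk _ = _
  rw [Submodule.Quotient.mk_smul]
  rfl
lemma append_eval {α : Type*} {p q : ℕ} (a : Fin p → α) (c : Fin q → α) (k : Fin (p+q)) :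
    Fin.append a c k = if h : (k:ℕ) < p then a ⟨k, h⟩ else c ⟨(k:ℕ) - p, by omega⟩ := by
  split_ifs with h
  · exact (congrArg (Fin.append a c) (Fin.ext rfl : k = Fin.castAdd q ⟨(k:ℕ), h⟩)).trans
      (Fin.append_left a c _)
  · exact (congrArg (Fin.append a c)
      (Fin.ext (by simp; omega) : k = Fin.natAdd p ⟨(k:ℕ) - p, by omega⟩)).trans
      (Fin.append_right a c _)

lemma nat_key (p a s : ℕ) (ha : a ≤ p+1) (hs : s ≤ p) :
    (a + (p+1-s)) % (p+2) = p+1 - ((p+2-a+s) % (p+2)) := by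
  rcases le_or_gt a s with h | h
  · rw [Nat.mod_eq_of_lt (by omega), Nat.mod_eq_sub_mod (by omega), Nat.mod_eq_of_lt (by omega)]
    omega
  · rw [Nat.mod_eq_sub_mod (by omega), Nat.mod_eq_of_lt (by omega), Nat.mod_eq_of_lt (by omega)]
    omega

open Fin.NatCast in
lemma word_eq {α : Type*} (l m : ℕ) (w : Fin (l+2) → α) (u : Fin (m+2) → α)
    (i : Fin (l+2)) (j : Fin (m+2)) (k : Fin (l+m+2)) :
    Fin.append (dw w i) (dw u j) (Fin.cast (by omega) (Fin.rev k)) =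
    Fin.append (dw (fun t => w t.rev) i.rev) (dw (fun t => u t.rev) j.rev)
      (Fin.cast (by omega) (k - ((m+1 : ℕ) : Fin (l+m+2)))) := by
  have hk := k.isLt
  have hc : (((m+1 : ℕ) : Fin (l+m+2)) : ℕ) = m+1 := Fin.val_cast_of_lt (by omega)
  rw [append_eval, append_eval]
  rcases le_or_gt (m+1) k.val with hcase | hcase
  · have e1 : (k - ((m+1:ℕ) : Fin (l+m+2))).val = k.val - (m+1) := by
      rw [Fin.sub_def]
      simp only [hc]
      rw [Nat.mod_eq_sub_mod (by omega), Nat.mod_eq_of_lt (by omega)]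
      omega
    rw [dif_pos (by simp only [Fin.coe_cast, Fin.val_rev]; omega),
        dif_pos (by simp only [Fin.coe_cast, e1]; omega)]
    show w _ = w _
    congr 1
    apply Fin.ext
    simp only [Fin.val_add, Fin.val_succ, Fin.val_rev, Fin.coe_cast, e1]
    have := nat_key l i.val (k.val - (m+1)) (by omega) (by omega)
    rw [show i.val + (l+1-(k.val-(m+1))) = i.val + (l + m + 2 - (k.val + 1) + 1) from by omega,
      show l+2 - i.val + (k.val - (m+1)) = l + 2 - (i.val + 1) + (k.val - (m + 1) + 1) from by
        omega] at this
    have hb := Nat.mod_lt (l+2 - (i.val+1) + (k.val - (m+1) + 1)) (y := l+2) (by omega)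
    show (i.val + (l + m + 2 - (k.val + 1) + 1)) % (l + 2)
      = l + 2 - ((l + 2 - (i.val + 1) + (k.val - (m + 1) + 1)) % (l + 2) + 1)
    omega
  · have e1 : (k - ((m+1:ℕ) : Fin (l+m+2))).val = k.val + l + 1 := by
      rw [Fin.sub_def]
      simp only [hc]
      rw [Nat.mod_eq_of_lt (by omega)]
      omega
    rw [dif_neg (by simp only [Fin.coe_cast, Fin.val_rev]; omega),
        dif_neg (by simp only [Fin.coe_cast, e1]; omega)]
    show u _ = u _
    congr 1
    apply Fin.ext
    simp only [Fin.val_add, Fin.val_succ, Fin.val_rev, Fin.coe_cast, e1]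
    have := nat_key m j.val k.val (by omega) (by omega)
    rw [show j.val + (m+1-k.val) = j.val + (l + m + 2 - (k.val + 1) - (l + 1) + 1) from by omega,
      show m+2 - j.val + k.val = m + 2 - (j.val + 1) + (k.val + l + 1 - (l + 1) + 1) from by
        omega] at this
    have hb := Nat.mod_lt (m+2 - (j.val+1) + (k.val + l + 1 - (l+1) + 1)) (y := m+2) (by omega)
    show (j.val + (l + m + 2 - (k.val + 1) - (l + 1) + 1)) % (m + 2)
      = m + 2 - ((m + 2 - (j.val + 1) + (k.val + l + 1 - (l + 1) + 1)) % (m + 2) + 1)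
    omega
lemma mono_mem_span {ι : Type*} (b : Module.Basis ι K V) {n : ℕ} (v : Fin n → V) :
    mono K V v ∈ Submodule.span K
      (Set.range (fun w : Fin n → ι => mono K V (fun k => b (w k)))) := by
  classical
  have hv : v = fun i2 => ∑ x ∈ (b.repr (v i2)).support, b.repr (v i2) x • b x := by
    funext i2
    conv_lhs => rw [← b.linearCombination_repr (v i2)]
    rw [Finsupp.linearCombination_apply, Finsupp.sum]
  rw [mono, hv, MultilinearMap.map_sum_finset]
  apply Submodule.sum_mem
  intro r hr
  rw [MultilinearMap.map_smul_univ]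
  exact Submodule.smul_mem _ _ (Submodule.subset_span ⟨fun i2 => r i2, rfl⟩)

lemma LV_ext {ι : Type*} (b : Module.Basis ι K V) {W : Type*} [AddCommMonoid W] [Module K W]
    (f g : LV K V →ₗ[K] W)
    (h : ∀ (l : ℕ) (w : Fin (l+2) → ι),
      f (ofL K V l (cls K V (mono K V fun k => b (w k)))) =
      g (ofL K V l (cls K V (mono K V fun k => b (w k))))) : f = g := by
  apply DirectSum.linearMap_ext
  intro l
  have hq : (f ∘ₗ DirectSum.lof K ℕ (fun i => Coinv K V (i + 2)) l) ∘ₗ (cycRel K V (l+2)).mkQ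
      = (g ∘ₗ DirectSum.lof K ℕ (fun i => Coinv K V (i + 2)) l) ∘ₗ (cycRel K V (l+2)).mkQ := by
    have htop : Submodule.span K
        (Set.range (fun w : Fin (l+2) → ι => mono K V (fun k => b (w k)))) = ⊤ := by
      rw [eq_top_iff, ← PiTensorProduct.span_tprod_eq_top]
      apply Submodule.span_le.2
      rintro x ⟨f, rfl⟩
      exact mono_mem_span K V b f
    apply LinearMap.ext_on htop
    rintro x ⟨w, rfl⟩
    exact h l w
  exact LinearMap.ext fun q => Submodule.Quotient.induction_on _ q fun y => LinearMap.congr_fun hq y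

/-- The involution `ι` of `L(V)`, induced by
`ι(α₁ ⊗ ⋯ ⊗ α_l) = (-1)^l α_l ⊗ ⋯ ⊗ α₁`, is well defined on coinvariants and is
a Lie algebra involution: `[ι(x), ι(y)] = ι([x, y])` for all `x, y ∈ L(V)`. -/
theorem iota_isLieInvolution
    {ι : Type*} (B : V →ₗ[K] V →ₗ[K] K) (hB : ∀ v : V, B v v = 0)
    (b : Module.Basis ι K V)
    (Br : LV K V →ₗ[K] LV K V →ₗ[K] LV K V) (hBr : IsBracket K V B b Br) :
    (∃ J : LV K V →ₗ[K] LV K V, IsIota K V J) ∧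
    (∀ J : LV K V →ₗ[K] LV K V, IsIota K V J →
      (∀ x : LV K V, J (J x) = x) ∧
      (∀ x y : LV K V, Br (J x) (J y) = J (Br x y))) := by
  refine ⟨⟨Jdef K V, Jdef_isIota K V⟩, fun J hJ => ?_⟩
  have hJd : J = Jdef K V := by
    apply LV_ext K V b (W := LV K V)
    intro l w
    rw [hJ l (fun k => b (w k)), Jdef_isIota K V l (fun k => b (w k))]
  subst hJd
  constructor
  · intro x
    have h2 : (Jdef K V) ∘ₗ (Jdef K V) = LinearMap.id := by
      apply LV_ext K V b (W := LV K V)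
      intro l w
      simp only [LinearMap.comp_apply, LinearMap.id_apply]
      rw [Jdef_isIota K V l (fun k => b (w k)), map_smul, map_smul,
        Jdef_isIota K V l ((fun k => b (w k)) ∘ Fin.rev), map_smul,
        show ((fun k => b (w k)) ∘ Fin.rev) ∘ Fin.rev = fun k => b (w k) from
          funext fun k => by simp [Fin.rev_rev],
        smul_smul, ← pow_add, Even.neg_one_pow ⟨l+2, by ring⟩, one_smul]
    simpa using LinearMap.congr_fun h2 x
  · intro x y
    have key : ((Br.comp (Jdef K V)).compl₂ (Jdef K V)) = Br.compr₂ (Jdef K V) := by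
      apply LV_ext K V b (W := LV K V →ₗ[K] LV K V)
      intro l w
      apply LV_ext K V b (W := LV K V)
      intro m u
      simp only [LinearMap.compl₂_apply, LinearMap.comp_apply, LinearMap.compr₂_apply]
      rw [Jdef_isIota K V l (fun k => b (w k)), Jdef_isIota K V m (fun k => b (u k)),
        map_smul, map_smul, map_smul, LinearMap.smul_apply, map_smul]
      rw [show (fun k => b (w k)) ∘ Fin.rev = fun k => b ((fun t : Fin (l+2) => w t.rev) k)
          from rfl,
        show (fun k => b (u k)) ∘ Fin.rev = fun k => b ((fun t : Fin (m+2) => u t.rev) k)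
          from rfl]
      rw [hBr l m (fun t => w t.rev) (fun t => u t.rev), hBr l m w u]
      simp only [map_sum, map_smul, Finset.smul_sum]
      refine Fintype.sum_equiv Fin.revPerm _ _ fun i => ?_
      refine Fintype.sum_equiv Fin.revPerm _ _ fun j => ?_
      simp only [Fin.revPerm_apply]
      rw [Jdef_isIota K V (l+m)
        (fun k => b (Fin.append (dw w i.rev) (dw u j.rev) (Fin.cast (by omega) k))), map_smul]
      rw [open Fin.NatCast in show ((fun k : Fin (l+m+2) =>
            b (Fin.append (dw w i.rev) (dw u j.rev) (Fin.cast (by omega) k))) ∘ Fin.rev)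
          = fun k : Fin (l+m+2) => b (Fin.append (dw (fun t => w t.rev) i)
              (dw (fun t => u t.rev) j)
              (Fin.cast (by omega) (k - ((m+1 : ℕ) : Fin (l+m+2))))) from
          funext fun k => congrArg b (((word_eq l m w u i.rev j.rev k).trans
            (by simp only [Fin.rev_rev])))]
      rw [open Fin.NatCast in show cls K V (mono K V fun k : Fin (l+m+2) =>
            b (Fin.append (dw (fun t => w t.rev) i) (dw (fun t => u t.rev) j)
              (Fin.cast (by omega) (k - ((m+1 : ℕ) : Fin (l+m+2))))))
          = cls K V (mono K V fun k : Fin (l+m+2) =>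
            b (Fin.append (dw (fun t => w t.rev) i) (dw (fun t => u t.rev) j)
              (Fin.cast (by omega) k))) from
          cls_shift K V (l+m+1) (fun k => b (Fin.append (dw (fun t => w t.rev) i)
            (dw (fun t => u t.rev) j) (Fin.cast (by omega) k))) (m+1)]
      rw [smul_smul, smul_smul, smul_smul]
      congr 1
      rw [← pow_add, show l+2+(m+2) = l+m+2+2 from by omega, pow_add,
        neg_one_sq, mul_one, mul_comm]
    simpa using LinearMap.congr_fun (LinearMap.congr_fun key x) y

end
end

section
/- Let V be finite-dimensional with basis {x₁, …, x_r}, and let α ∈ (V^⊗l)^{Z/lZ} be invariant under the cyclic action. Write α = Σ_{i=1}^{r} x_i ⊗ p_i with p_i ∈ V^⊗(l−1). Then α ∈ P_{l,+} if and only if p₁, …, p_r ∈ P_{l−1,−}, and α ∈ P_{l,−} if and only if p₁, …, p_r ∈ P_{l−1,+}. -/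
/-!
We identify the `l`-th tensor power `V^{⊗l}` of a vector space `V` with a
distinguished basis indexed by `ι` with the space of noncommutative homogeneous
polynomials of degree `l` in the variables `ι`, i.e. with formal `K`-linear
combinations of words of length `l` in the alphabet `ι`.
-/

noncomputable section

/-- Homogeneous noncommutative polynomials of degree `l` in variables `ι`
(the `l`-th tensor power of the vector space with basis `ι`). -/
abbrev PolyH (K : Type*) [Field K] (ι : Type*) (l : ℕ) : Type _ := (Fin l → ι) →₀ K

variable {K : Type*} [Field K] {ι : Type*}

/-- The cyclic shift `σ` (generator of `ℤ/lℤ`), permuting tensor factors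
cyclically: `α₁ ⊗ α₂ ⊗ ⋯ ⊗ α_l ↦ α₂ ⊗ ⋯ ⊗ α_l ⊗ α₁`. -/
def rotP {l : ℕ} : PolyH K ι l →ₗ[K] PolyH K ι l :=
  Finsupp.lmapDomain K K fun w => w ∘ finRotate l

/-- Reversal of tensor factors: `α₁ ⊗ ⋯ ⊗ α_l ↦ α_l ⊗ ⋯ ⊗ α₁`
(the unsigned involution `I`). -/
def revP {l : ℕ} : PolyH K ι l →ₗ[K] PolyH K ι l :=
  Finsupp.lmapDomain K K fun w => w ∘ Fin.rev

/-- The involution `ι(α₁ ⊗ ⋯ ⊗ α_l) = (-1)^l · α_l ⊗ ⋯ ⊗ α₁`. -/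
def iotaP {l : ℕ} : PolyH K ι l →ₗ[K] PolyH K ι l :=
  ((-1 : K) ^ l) • revP

/-- `x_i ⊗ (-)` : prepend the letter `i`, `p ↦ x_i ⊗ p`. -/
def consP (i : ι) {l : ℕ} : PolyH K ι l →ₗ[K] PolyH K ι (l + 1) :=
  Finsupp.lmapDomain K K fun w => Fin.cons i w

/-- `(-) ⊗ x_i` : append the letter `i`, `p ↦ p ⊗ x_i`. -/
def snocP (i : ι) {l : ℕ} : PolyH K ι l →ₗ[K] PolyH K ι (l + 1) :=
  Finsupp.lmapDomain K K fun w => Fin.snoc w i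

/-- The trace `N = Σ_{r=0}^{l-1} σ^r` of the cyclic action on `V^{⊗l}`. -/
def NP {l : ℕ} : PolyH K ι l →ₗ[K] PolyH K ι l :=
  ∑ r ∈ Finset.range l, (rotP : Module.End K (PolyH K ι l)) ^ r

/-- Evaluation of a noncommutative homogeneous polynomial at the tuple `X`
of elements of an associative `K`-algebra `A`. -/
def evalP {l : ℕ} {A : Type*} [Ring A] [Algebra K A] (X : ι → A)
    (p : PolyH K ι l) : A :=
  p.sum fun w c => c • (List.ofFn fun k => X (w k)).prod

/-- The word `D_{i,i}(w) = w_{i+1} ⋯ w_{i-1}` (cyclically, omitting the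
letter `w_i`). -/
def dwP {n : ℕ} (w : Fin (n + 1) → ι) (i : Fin (n + 1)) : Fin n → ι :=
  fun k => w (i + k.succ)

-- aux
lemma snoc_inj (i : ι) {l : ℕ} : Function.Injective (fun w : Fin l → ι => (Fin.snoc w i : Fin (l+1) → ι)) := by
  intro a b h
  funext k
  have := congrFun h k.castSucc
  simpa using this

def extP (i : ι) {l : ℕ} : PolyH K ι (l + 1) →ₗ[K] PolyH K ι l :=
  Finsupp.lcomapDomain _ (snoc_inj i)

lemma comp_rot (i : ι) {l : ℕ} (w : Fin l → ι) :
    (Fin.cons i w : Fin (l + 1) → ι) ∘ finRotate (l + 1) = Fin.snoc w i := by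
  funext j
  induction j using Fin.lastCases with
  | last => simp [Function.comp, finRotate_succ_apply, Fin.last_add_one]
  | cast k => simp [Function.comp, finRotate_succ_apply, Fin.coeSucc_eq_succ]

lemma comp_rev (i : ι) {l : ℕ} (w : Fin l → ι) :
    (Fin.cons i w : Fin (l + 1) → ι) ∘ Fin.rev = Fin.snoc (w ∘ Fin.rev) i := by
  funext j
  induction j using Fin.lastCases with
  | last => simp [Function.comp, Fin.rev_last]
  | cast k => simp [Function.comp, Fin.rev_castSucc]

lemma rotP_consP (i : ι) {l : ℕ} (q : PolyH K ι l) : rotP (consP i q) = snocP i q := by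
  simp only [rotP, consP, snocP, Finsupp.lmapDomain_apply, ← Finsupp.mapDomain_comp]
  exact Finsupp.mapDomain_congr fun w _ => comp_rot i w

lemma revP_consP (i : ι) {l : ℕ} (q : PolyH K ι l) : revP (consP i q) = snocP i (revP q) := by
  simp only [revP, consP, snocP, Finsupp.lmapDomain_apply, ← Finsupp.mapDomain_comp]
  exact Finsupp.mapDomain_congr fun w _ => comp_rev i w

lemma extP_snocP [DecidableEq ι] (i j : ι) {l : ℕ} (q : PolyH K ι l) :
    extP i (snocP j q) = if i = j then q else 0 := by
  ext w
  simp only [extP, snocP, Finsupp.lcomapDomain, Finsupp.lmapDomain_apply,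
    LinearMap.coe_mk, AddHom.coe_mk, Finsupp.comapDomain_apply]
  split
  · subst ‹i = j›; rw [Finsupp.mapDomain_apply (snoc_inj i)]
  · rw [Finsupp.mapDomain_notin_range]
    · rfl
    · rintro ⟨w', hw'⟩
      have hji : j = i := by simpa using congrFun hw' (Fin.last l)
      exact ‹¬ i = j› hji.symm

lemma sum_snocP_inj {r l : ℕ} (q q' : Fin r → PolyH K (Fin r) l)
    (h : ∑ i : Fin r, snocP i (q i) = ∑ i : Fin r, snocP i (q' i)) : ∀ i, q i = q' i := by
  intro i
  have h2 := congrArg (extP i) h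
  rw [map_sum, map_sum] at h2
  simpa [extP_snocP, Finset.sum_ite_eq] using h2


/-- **Lemma.** Let `V` be finite-dimensional with basis
`{x₁, …, x_r}`, and let `α ∈ (V^{⊗(l+1)})^{ℤ/(l+1)ℤ}` be invariant for the
cyclic action.  Write `α = Σᵢ xᵢ ⊗ pᵢ` with `pᵢ ∈ V^{⊗l}`.  Then `α` is in the
`+1`-eigenspace `P_{l+1,+}` of `ι` iff all `pᵢ` are in `P_{l,-}`, and `α` is in
`P_{l+1,-}` iff all `pᵢ` are in `P_{l,+}`. -/
theorem invariant_decomposition_eigenspaces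
    {K : Type*} [Field K] (r l : ℕ)
    (α : PolyH K (Fin r) (l + 1)) (hα : rotP α = α)
    (p : Fin r → PolyH K (Fin r) l)
    (hdec : α = ∑ i : Fin r, consP i (p i)) :
    (iotaP α = α ↔ ∀ i, iotaP (p i) = -(p i)) ∧
    (iotaP α = -α ↔ ∀ i, iotaP (p i) = p i) := by
  have hsnoc : α = ∑ i : Fin r, snocP i (p i) := by
    conv_lhs => rw [← hα, hdec]
    rw [map_sum]
    exact Finset.sum_congr rfl fun i _ => rotP_consP i (p i)
  have hrev : revP α = ∑ i : Fin r, snocP i (revP (p i)) := by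
    rw [hdec, map_sum]
    exact Finset.sum_congr rfl fun i _ => revP_consP i (p i)
  have hio : iotaP α = ∑ i : Fin r, snocP i (((-1 : K) ^ (l + 1)) • revP (p i)) := by
    simp only [iotaP, LinearMap.smul_apply, hrev, Finset.smul_sum, map_smul]
  have hsign : ((-1 : K) ^ (l + 1)) = -((-1 : K) ^ l) := by ring
  have hiop : ∀ i, iotaP (p i) = ((-1 : K) ^ l) • revP (p i) := fun i => rfl
  constructor
  · constructor
    · intro h i
      have hq := sum_snocP_inj _ _ (hio.symm.trans (h.trans hsnoc)) i
      rw [hsign, neg_smul] at hq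
      rw [hiop]
      exact neg_eq_iff_eq_neg.mp hq
    · intro h
      rw [hio]
      conv_rhs => rw [hsnoc]
      refine Finset.sum_congr rfl fun i _ => ?_
      congr 1
      rw [hsign, neg_smul, ← hiop, h i, neg_neg]
  · constructor
    · intro h i
      have hmα : -α = ∑ i : Fin r, snocP i (-(p i)) := by
        rw [hsnoc]; simp [← Finset.sum_neg_distrib]
      have hq := sum_snocP_inj _ _ (hio.symm.trans (h.trans hmα)) i
      rw [hsign, neg_smul] at hq
      rw [hiop]
      exact neg_injective hq
    · intro h
      rw [hio, hsnoc]
      rw [← Finset.sum_neg_distrib]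
      refine Finset.sum_congr rfl fun i _ => ?_
      rw [← map_neg]
      congr 1
      rw [hsign, neg_smul, ← hiop, h i]


end
end

section
/- Let dim V = 2 with basis {x, y}, ⟨x, y⟩ = 1, and let g be either so_n = {X ∈ gl_n : Xᵗ = −X} or sp_n = {X ∈ gl_n : JX = −XᵗJ} for J the matrix of a nondegenerate alternating form. Under the map ᾱ ↦ F_α from L(V) to vector fields on gl_n × gl_n, the image of the subalgebra P₊(V) consists of vector fields on g × g tangent to the fibers of the commutator map g × g → g, (X,Y) ↦ XY − YX; that is, for ᾱ ∈ P₊(V) and X, Y ∈ g, p_α(X,Y) and q_α(X,Y) lie in g and [X − ε q_α(X,Y), Y − ε p_α(X,Y)] = [X,Y] in g[ε]. -/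
/-!
We identify the `l`-th tensor power `V^{⊗l}` of a vector space `V` with a
distinguished basis indexed by `ι` with the space of noncommutative homogeneous
polynomials of degree `l` in the variables `ι`, i.e. with formal `K`-linear
combinations of words of length `l` in the alphabet `ι`.
-/

noncomputable section

variable {K : Type*} [Field K] {ι : Type*}

-- Auxiliary lemmas
open Fin.NatCast Fin.CommRing

theorem rotP_apply {l : ℕ} (p : PolyH K ι l) :
    rotP p = Finsupp.mapDomain (fun w => w ∘ finRotate l) p := rfl

theorem rotP_pow_apply {m : ℕ} (r : ℕ) (p : PolyH K ι (m + 1)) :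
    ((rotP : Module.End K (PolyH K ι (m + 1))) ^ r) p =
      Finsupp.mapDomain (fun w k => w (k + (r : Fin (m + 1)))) p := by
  induction r with
  | zero =>
      rw [pow_zero]
      have h : (fun (w : Fin (m+1) → ι) k => w (k + ((0 : ℕ) : Fin (m + 1)))) = id := by
        funext w k; norm_num
      rw [h, Finsupp.mapDomain_id]
      rfl
  | succ r ih =>
      rw [pow_succ', Module.End.mul_apply, rotP_apply, ih, ← Finsupp.mapDomain_comp]
      have h : ((fun (w : Fin (m+1) → ι) => w ∘ finRotate (m+1)) ∘
          (fun (w : Fin (m+1) → ι) k => w (k + (r : Fin (m + 1))))) =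
          fun w k => w (k + ((r+1 : ℕ) : Fin (m + 1))) := by
        funext w k
        show w (finRotate (m+1) k + (r : Fin (m+1))) = _
        rw [finRotate_succ_apply]
        push_cast
        ring_nf
      rw [h]
theorem rotP_pow_card {m : ℕ} (p : PolyH K ι (m + 1)) :
    ((rotP : Module.End K (PolyH K ι (m + 1))) ^ (m + 1)) p = p := by
  rw [rotP_pow_apply]
  have h : (fun (w : Fin (m+1) → ι) k => w (k + ((m + 1 : ℕ) : Fin (m + 1)))) = id := by
    funext w k
    simp [Fin.natCast_self]
  rw [h, Finsupp.mapDomain_id]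

theorem NP_apply {l : ℕ} (p : PolyH K ι l) :
    NP p = ∑ r ∈ Finset.range l, ((rotP : Module.End K (PolyH K ι l)) ^ r) p := by
  simp [NP, LinearMap.sum_apply]

theorem rotP_NP {l : ℕ} (p : PolyH K ι l) : rotP (NP p) = NP p := by
  obtain _ | m := l
  · have h : (NP p : PolyH K ι 0) = 0 := by simp [NP_apply]
    simp [h]
  · have h1 : rotP (NP p) = ∑ r ∈ Finset.range (m + 1),
        ((rotP : Module.End K (PolyH K ι (m+1))) ^ (r + 1)) p := by
      rw [NP_apply, map_sum]
      exact Finset.sum_congr rfl fun r _ => by rw [pow_succ', Module.End.mul_apply]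
    have h2 := Finset.sum_range_succ' (fun r => ((rotP : Module.End K (PolyH K ι (m+1))) ^ r) p) (m + 1)
    have h3 := Finset.sum_range_succ (fun r => ((rotP : Module.End K (PolyH K ι (m+1))) ^ r) p) (m + 1)
    rw [h1, NP_apply]
    have h4 : ((rotP : Module.End K (PolyH K ι (m+1))) ^ (m + 1)) p = ((rotP : Module.End K (PolyH K ι (m+1))) ^ 0) p := by
      rw [pow_zero, rotP_pow_card]; rfl
    rw [h3, h4] at h2
    exact (add_right_cancel h2).symm
theorem NP_rot_sub {l : ℕ} (t : PolyH K ι l) : NP (rotP t - t) = 0 := by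
  have h : NP (rotP t) = rotP (NP t) := by
    rw [NP_apply, NP_apply, map_sum]
    exact Finset.sum_congr rfl fun r _ => by
      rw [← Module.End.mul_apply, ← pow_succ, pow_succ', Module.End.mul_apply]
  rw [map_sub, h, rotP_NP, sub_self]

theorem NP_iota_of_mem {l : ℕ} {α : PolyH K ι l}
    (hα : iotaP α - α ∈
      Submodule.span K {z | ∃ t : PolyH K ι l, z = rotP t - t}) :
    NP (iotaP α) = NP α := by
  have hker : Submodule.span K {z | ∃ t : PolyH K ι l, z = rotP t - t} ≤
      LinearMap.ker (NP : PolyH K ι l →ₗ[K] PolyH K ι l) := by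
    rw [Submodule.span_le]
    rintro z ⟨t, rfl⟩
    exact NP_rot_sub t
  have h0 : NP (iotaP α - α) = 0 := hker hα
  rw [map_sub, sub_eq_zero] at h0
  exact h0

theorem revP_apply {l : ℕ} (p : PolyH K ι l) :
    revP p = Finsupp.mapDomain (fun w => w ∘ Fin.rev) p := rfl

theorem revP_rotP_pow {m : ℕ} (r : ℕ) (hr : r ≤ m) (p : PolyH K ι (m + 1)) :
    revP (((rotP : Module.End K (PolyH K ι (m + 1))) ^ (m - r)) p) =
      ((rotP : Module.End K (PolyH K ι (m + 1))) ^ (r + 1)) (revP p) := by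
  rw [rotP_pow_apply, revP_apply, ← Finsupp.mapDomain_comp,
    rotP_pow_apply, revP_apply, ← Finsupp.mapDomain_comp]
  have hcast : ((m - r : ℕ) : Fin (m + 1)) = -((r + 1 : ℕ) : Fin (m + 1)) := by
    have : ((m - r : ℕ) : Fin (m + 1)) + ((r + 1 : ℕ) : Fin (m + 1)) = 0 := by
      rw [← Nat.cast_add, show m - r + (r + 1) = m + 1 by omega, Fin.natCast_self]
    exact eq_neg_of_add_eq_zero_left this
  have h : ((fun (w : Fin (m+1) → ι) => w ∘ Fin.rev) ∘
      (fun (w : Fin (m+1) → ι) k => w (k + ((m - r : ℕ) : Fin (m + 1))))) =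
      ((fun (w : Fin (m+1) → ι) k => w (k + ((r + 1 : ℕ) : Fin (m + 1)))) ∘
      (fun (w : Fin (m+1) → ι) => w ∘ Fin.rev)) := by
    funext w
    show (fun k => w (k + _)) ∘ Fin.rev = fun k => (w ∘ Fin.rev) (k + _)
    funext k
    show w (Fin.rev k + _) = w (Fin.rev (k + _))
    rw [Fin.rev_add, hcast, sub_eq_add_neg]
  rw [h]

theorem revP_NP {l : ℕ} (p : PolyH K ι l) : revP (NP p) = NP (revP p) := by
  obtain _ | m := l
  · have h : ∀ q : PolyH K ι 0, NP q = 0 := fun q => by simp [NP_apply]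
    simp [h]
  · rw [NP_apply, map_sum]
    have h1 : ∑ r ∈ Finset.range (m + 1), revP (((rotP : Module.End K (PolyH K ι (m+1))) ^ r) p)
        = ∑ r ∈ Finset.range (m + 1), revP (((rotP : Module.End K (PolyH K ι (m+1))) ^ (m - r)) p) := by
      exact (Finset.sum_range_reflect (fun r => revP (((rotP : Module.End K (PolyH K ι (m+1))) ^ r) p)) (m+1)).symm.trans (Finset.sum_congr rfl fun r hr => rfl)
    rw [h1]
    have h2 : ∑ r ∈ Finset.range (m + 1), revP (((rotP : Module.End K (PolyH K ι (m+1))) ^ (m - r)) p)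
        = ∑ r ∈ Finset.range (m + 1), ((rotP : Module.End K (PolyH K ι (m+1))) ^ (r + 1)) (revP p) := by
      refine Finset.sum_congr rfl fun r hr => ?_
      exact revP_rotP_pow r (by simpa using Nat.lt_succ_iff.mp (Finset.mem_range.mp hr)) p
    rw [h2]
    have h3 : ∑ r ∈ Finset.range (m + 1), ((rotP : Module.End K (PolyH K ι (m+1))) ^ (r + 1)) (revP p)
        = rotP (NP (revP p)) := by
      rw [NP_apply, map_sum]
      exact Finset.sum_congr rfl fun r _ => by rw [pow_succ', Module.End.mul_apply]
    rw [h3, rotP_NP]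

theorem iotaP_NP {l : ℕ} (p : PolyH K ι l) : iotaP (NP p) = NP (iotaP p) := by
  show ((-1 : K) ^ l • revP) (NP p) = NP (((-1 : K) ^ l • revP) p)
  rw [LinearMap.smul_apply, LinearMap.smul_apply, map_smul, revP_NP]
theorem consP_apply {l : ℕ} (i : ι) (p : PolyH K ι l) :
    consP i p = Finsupp.mapDomain (fun w => (Fin.cons i w : Fin (l+1) → ι)) p := rfl

theorem snocP_apply {l : ℕ} (i : ι) (p : PolyH K ι l) :
    snocP i p = Finsupp.mapDomain (fun w => (Fin.snoc w i : Fin (l+1) → ι)) p := rfl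

theorem cons_comp_rotate {l : ℕ} (i : ι) (w : Fin l → ι) :
    (Fin.cons i w : Fin (l+1) → ι) ∘ finRotate (l+1) = Fin.snoc w i := by
  funext k
  simp only [Function.comp_apply, finRotate_succ_apply]
  induction k using Fin.lastCases with
  | last => simp [Fin.last_add_one]
  | cast j => simp [Fin.coeSucc_eq_succ]

theorem cons_comp_rev {l : ℕ} (i : ι) (w : Fin l → ι) :
    (Fin.cons i w : Fin (l+1) → ι) ∘ Fin.rev = Fin.snoc (w ∘ Fin.rev) i := by
  funext k
  simp only [Function.comp_apply]
  induction k using Fin.lastCases with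
  | last => simp [Fin.rev_last]
  | cast j => simp [Fin.rev_castSucc]

theorem rotP_cons {l : ℕ} (i : ι) (p : PolyH K ι l) :
    rotP (consP i p) = snocP i p := by
  rw [consP_apply, rotP_apply, ← Finsupp.mapDomain_comp, snocP_apply]
  have h : ((fun (w : Fin (l+1) → ι) => w ∘ finRotate (l+1)) ∘
      (fun (w : Fin l → ι) => (Fin.cons i w : Fin (l+1) → ι))) =
      fun (w : Fin l → ι) => (Fin.snoc w i : Fin (l+1) → ι) := by
    funext w
    exact cons_comp_rotate i w
  rw [h]

theorem revP_cons {l : ℕ} (i : ι) (p : PolyH K ι l) :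
    revP (consP i p) = snocP i (revP p) := by
  rw [consP_apply, revP_apply, ← Finsupp.mapDomain_comp, snocP_apply, revP_apply,
    ← Finsupp.mapDomain_comp]
  have h : ((fun (w : Fin (l+1) → ι) => w ∘ Fin.rev) ∘
      (fun (w : Fin l → ι) => (Fin.cons i w : Fin (l+1) → ι))) =
      ((fun (w : Fin l → ι) => (Fin.snoc w i : Fin (l+1) → ι)) ∘
        (fun (w : Fin l → ι) => w ∘ Fin.rev)) := by
    funext w
    exact cons_comp_rev i w
  rw [h]

theorem iotaP_cons {l : ℕ} (i : ι) (p : PolyH K ι (l + 1)) :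
    iotaP (consP i p) = -(snocP i (iotaP p)) := by
  show ((-1 : K) ^ (l + 2) • revP) (consP i p) = -(snocP i (((-1 : K) ^ (l+1) • revP) p))
  rw [LinearMap.smul_apply, LinearMap.smul_apply, revP_cons, map_smul, pow_succ]
  rw [mul_smul, neg_one_smul, smul_neg]

theorem rotP_injective {l : ℕ} : Function.Injective (rotP : PolyH K ι l →ₗ[K] PolyH K ι l) := by
  intro a b hab
  have hinj : Function.Injective (fun (w : Fin l → ι) => w ∘ finRotate l) := by
    intro w w' hw
    funext k
    obtain ⟨j, rfl⟩ := (finRotate l).surjective k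
    exact congrFun hw j
  exact Finsupp.mapDomain_injective hinj hab

theorem cons_eq_cons {l : ℕ} {i j : ι} (hij : i ≠ j) {u v : PolyH K ι l}
    (h : consP i u = consP j v) : u = 0 := by
  ext w
  have hinj : Function.Injective (fun (w : Fin l → ι) => (Fin.cons i w : Fin (l+1) → ι)) :=
    fun a b hab => funext fun k => by simpa using congrFun hab k.succ
  have h1 : (consP i u) (Fin.cons i w) = u w := by
    rw [consP_apply]
    exact Finsupp.mapDomain_apply hinj u w
  have h2 : (consP j v) (Fin.cons i w) = 0 := by
    rw [consP_apply]
    refine Finsupp.mapDomain_notin_range _ _ ?_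
    rintro ⟨w', hw'⟩
    have h0 := congrFun hw' 0
    simp only [Fin.cons_zero] at h0
    exact hij h0.symm
  rw [← h1, h, h2]
  rfl
theorem iota_eq_neg {l : ℕ} {i j : ι} (hij : i ≠ j) {α : PolyH K ι (l + 2)}
    (hα : iotaP α - α ∈
      Submodule.span K {z | ∃ t : PolyH K ι (l + 2), z = rotP t - t})
    {p q : PolyH K ι (l + 1)} (hpq : NP α = consP i p - consP j q) :
    iotaP p = -p ∧ iotaP q = -q := by
  have h1 : iotaP (NP α) = NP α := by rw [iotaP_NP, NP_iota_of_mem hα]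
  have h2 : NP α = rotP (-(consP i (iotaP p)) + consP j (iotaP q)) := by
    rw [map_add, map_neg, rotP_cons, rotP_cons, ← h1, hpq, map_sub, iotaP_cons, iotaP_cons]
    abel
  have h3 : rotP (NP α) = rotP (-(consP i (iotaP p)) + consP j (iotaP q)) := by
    rw [rotP_NP]; exact h2
  have h4 := rotP_injective h3
  have h5 : consP i p - consP j q = consP j (iotaP q) - consP i (iotaP p) := by
    rw [← hpq, h4]; abel
  have h6 := sub_eq_sub_iff_add_eq_add.mp h5
  have h7 : consP i (p + iotaP p) = consP j (q + iotaP q) := by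
    rw [map_add, map_add, h6]; exact add_comm _ _
  have hp0 : p + iotaP p = 0 := cons_eq_cons hij h7
  have hq0 : q + iotaP q = 0 := cons_eq_cons hij.symm h7.symm
  exact ⟨eq_neg_of_add_eq_zero_right hp0, eq_neg_of_add_eq_zero_right hq0⟩
section Eval
variable {A : Type*} [Ring A] [Algebra K A]

theorem evalP_eq' {l : ℕ} (X : ι → A) (p : PolyH K ι l) :
    evalP X p = Finsupp.linearCombination K (fun w => (List.ofFn fun k => X (w k)).prod) p := rfl

theorem evalP_add {l : ℕ} (X : ι → A) (p q : PolyH K ι l) :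
    evalP X (p + q) = evalP X p + evalP X q := by
  rw [evalP_eq', evalP_eq', evalP_eq', map_add]

theorem evalP_sub {l : ℕ} (X : ι → A) (p q : PolyH K ι l) :
    evalP X (p - q) = evalP X p - evalP X q := by
  rw [evalP_eq', evalP_eq', evalP_eq', map_sub]

theorem evalP_smul {l : ℕ} (X : ι → A) (c : K) (p : PolyH K ι l) :
    evalP X (c • p) = c • evalP X p := by
  rw [evalP_eq', evalP_eq', map_smul]

theorem evalP_neg {l : ℕ} (X : ι → A) (p : PolyH K ι l) :
    evalP X (-p) = -evalP X p := by
  rw [evalP_eq', evalP_eq', map_neg]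

theorem evalP_zero {l : ℕ} (X : ι → A) : evalP X (0 : PolyH K ι l) = 0 := by
  rw [evalP_eq', map_zero]

theorem evalP_single {l : ℕ} (X : ι → A) (w : Fin l → ι) (c : K) :
    evalP X (Finsupp.single w c) = c • (List.ofFn fun k => X (w k)).prod := by
  rw [evalP_eq', Finsupp.linearCombination_single]

theorem evalP_mapDomain {l m : ℕ} (f : (Fin l → ι) → (Fin m → ι)) (X : ι → A)
    (p : PolyH K ι l) :
    evalP X (Finsupp.mapDomain f p) =
      Finsupp.linearCombination K (fun w => (List.ofFn fun k => X (f w k)).prod) p := by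
  rw [evalP_eq', Finsupp.linearCombination_mapDomain]
  rfl

theorem evalP_cons {l : ℕ} (i : ι) (X : ι → A) (p : PolyH K ι l) :
    evalP X (consP i p) = X i * evalP X p := by
  rw [consP_apply, evalP_mapDomain, evalP_eq']
  rw [Finsupp.linearCombination_apply, Finsupp.linearCombination_apply, Finsupp.mul_sum]
  refine Finsupp.sum_congr fun w _ => ?_
  rw [List.ofFn_succ]
  simp only [Fin.cons_zero, Fin.cons_succ, List.prod_cons]
  rw [mul_smul_comm]

theorem evalP_snoc {l : ℕ} (i : ι) (X : ι → A) (p : PolyH K ι l) :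
    evalP X (snocP i p) = evalP X p * X i := by
  rw [snocP_apply, evalP_mapDomain, evalP_eq']
  rw [Finsupp.linearCombination_apply, Finsupp.linearCombination_apply, Finsupp.sum_mul]
  refine Finsupp.sum_congr fun w _ => ?_
  rw [List.ofFn_succ']
  simp only [Fin.snoc_castSucc, Fin.snoc_last, List.concat_eq_append, List.prod_append,
    List.prod_cons, List.prod_nil, mul_one]
  rw [smul_mul_assoc]

end Eval
theorem reverse_ofFn' {α : Type*} : ∀ (n : ℕ) (f : Fin n → α),
    (List.ofFn f).reverse = List.ofFn (fun i => f i.rev)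
  | 0, f => by simp
  | (n+1), f => by
      rw [List.ofFn_succ, List.reverse_cons, reverse_ofFn' n (fun i => f i.succ),
        List.ofFn_succ' (fun i => f i.rev)]
      simp [List.concat_eq_append, Fin.rev_castSucc, Fin.rev_last]

section Mat
open Matrix
variable {n : ℕ}

theorem J_prod (J : Matrix (Fin n) (Fin n) K) :
    ∀ (L : List (Matrix (Fin n) (Fin n) K)), (∀ A ∈ L, J * A = -Aᵀ * J) →
      J * L.prod = ((-1 : K) ^ L.length) • ((L.map Matrix.transpose).prod * J)
  | [], _ => by simp
  | (A :: L), h => by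
      have hA : J * A = -Aᵀ * J := h A List.mem_cons_self
      have hL := J_prod J L fun B hB => h B (List.mem_cons_of_mem A hB)
      rw [List.prod_cons, ← mul_assoc, hA, List.map_cons, List.prod_cons, List.length_cons,
        mul_assoc, hL, pow_succ, mul_smul_comm, neg_mul, smul_neg, ← mul_assoc,
        mul_neg_one, neg_smul]

theorem J_eval {d : ℕ} (J : Matrix (Fin n) (Fin n) K) (X : ι → Matrix (Fin n) (Fin n) K)
    (hJ : ∀ i, J * X i = -(X i)ᵀ * J) (β : PolyH K ι d) :
    J * evalP X β = (evalP X (iotaP β))ᵀ * J := by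
  induction β using Finsupp.induction_linear with
  | zero => simp [evalP_zero, map_zero]
  | add p q hp hq =>
      rw [map_add, evalP_add, evalP_add, mul_add, transpose_add, add_mul, hp, hq]
  | single w c =>
      have hiota : iotaP (Finsupp.single w c) =
          (-1 : K) ^ d • Finsupp.single (w ∘ Fin.rev) c := by
        show ((-1 : K) ^ d • revP) (Finsupp.single w c) = _
        rw [LinearMap.smul_apply, revP_apply, Finsupp.mapDomain_single]
      rw [hiota, evalP_smul, evalP_single, evalP_single]
      have hrev : ((List.ofFn fun k => X ((w ∘ Fin.rev) k)).prod)ᵀ =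
          ((List.ofFn fun k => X (w k)).map Matrix.transpose).prod := by
        rw [transpose_list_prod, List.map_ofFn, reverse_ofFn', List.map_ofFn]
        have hfn : (fun i : Fin d => (Matrix.transpose ∘ fun k => X ((w ∘ Fin.rev) k)) i.rev) =
            (Matrix.transpose ∘ fun k => X (w k)) := by
          funext i
          simp [Fin.rev_rev]
        rw [hfn]
      have hmem : ∀ B ∈ (List.ofFn fun k => X (w k)), J * B = -Bᵀ * J := by
        intro B hB
        rw [List.mem_ofFn] at hB
        obtain ⟨k, rfl⟩ := hB
        exact hJ (w k)
      rw [mul_smul_comm, J_prod J _ hmem, List.length_ofFn, transpose_smul, transpose_smul,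
        hrev, smul_mul_assoc, smul_mul_assoc]
      exact smul_comm _ _ _
end Mat
open TrivSqZeroExt DualNumber in
theorem dual_commutator {B : Type*} [Ring B] (X Y P Q : B)
    (h : X * P - Y * Q = P * X - Q * Y) :
    ((inl X : DualNumber B) - ε * inl Q) * ((inl Y : DualNumber B) - ε * inl P) -
      ((inl Y : DualNumber B) - ε * inl P) * ((inl X : DualNumber B) - ε * inl Q) =
    (inl X : DualNumber B) * inl Y - (inl Y : DualNumber B) * inl X := by
  have h2 : X * P + Q * Y = P * X + Y * Q := sub_eq_sub_iff_add_eq_add.mp h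
  ext
  · simp
  · simp only [TrivSqZeroExt.snd_mul, smul_eq_mul, TrivSqZeroExt.snd_sub, TrivSqZeroExt.snd_inl]
    simp [smul_eq_mul]
    rw [sub_eq_zero, ← neg_add, ← neg_add, neg_inj, h2]
    exact add_comm _ _

open Matrix TrivSqZeroExt in
/-- Let `dim V = 2` with basis `{x, y}` (`x = 0`, `y = 1`),
`⟨x, y⟩ = 1`, and let `𝔤` be either `𝔰𝔬_n = {X : Xᵀ = -X}` or
`𝔰𝔭_n = {X : J * X = -Xᵀ * J}` for `J` the matrix of a nondegenerate
alternating form.  If the class `ᾱ` of `α ∈ V^{⊗(l+2)}` lies in `P₊(V)`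
(i.e. `ι(α) - α` is in the span of the elements `σ(t) - t`) and
`N(α) = x ⊗ p_α - y ⊗ q_α`, then the vector field `F_α` restricts to a vector
field on `𝔤 × 𝔤` tangent to the fibers of the commutator map `𝔤 × 𝔤 → 𝔤`:
for `X, Y ∈ 𝔤` we have `p_α(X,Y), q_α(X,Y) ∈ 𝔤` and
`[X - ε q_α(X,Y), Y - ε p_α(X,Y)] = [X, Y]` in `𝔤[ε]` (dual numbers,
`ε² = 0`). -/
theorem Falpha_tangent_on_g
    {K : Type*} [Field K] (n l : ℕ)
    (α : PolyH K (Fin 2) (l + 2))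
    (hα : iotaP α - α ∈
      Submodule.span K {z | ∃ t : PolyH K (Fin 2) (l + 2), z = rotP t - t})
    (p q : PolyH K (Fin 2) (l + 1))
    (hpq : NP α = consP 0 p - consP 1 q) :
    -- the case 𝔤 = 𝔰𝔬_n
    (∀ X Y : Matrix (Fin n) (Fin n) K, Xᵀ = -X → Yᵀ = -Y →
      (evalP ![X, Y] p)ᵀ = -evalP ![X, Y] p ∧
      (evalP ![X, Y] q)ᵀ = -evalP ![X, Y] q ∧
      ((inl X : DualNumber (Matrix (Fin n) (Fin n) K)) -
            DualNumber.eps * inl (evalP ![X, Y] q)) *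
          ((inl Y : DualNumber (Matrix (Fin n) (Fin n) K)) -
            DualNumber.eps * inl (evalP ![X, Y] p)) -
        ((inl Y : DualNumber (Matrix (Fin n) (Fin n) K)) -
            DualNumber.eps * inl (evalP ![X, Y] p)) *
          ((inl X : DualNumber (Matrix (Fin n) (Fin n) K)) -
            DualNumber.eps * inl (evalP ![X, Y] q)) =
      (inl X : DualNumber (Matrix (Fin n) (Fin n) K)) * inl Y -
        (inl Y : DualNumber (Matrix (Fin n) (Fin n) K)) * inl X) ∧
    -- the case 𝔤 = 𝔰𝔭_n
    (∀ J : Matrix (Fin n) (Fin n) K,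
      (∀ v : Fin n → K, v ⬝ᵥ J.mulVec v = 0) → IsUnit J →
      ∀ X Y : Matrix (Fin n) (Fin n) K,
        J * X = -Xᵀ * J → J * Y = -Yᵀ * J →
      J * evalP ![X, Y] p = -(evalP ![X, Y] p)ᵀ * J ∧
      J * evalP ![X, Y] q = -(evalP ![X, Y] q)ᵀ * J ∧
      ((inl X : DualNumber (Matrix (Fin n) (Fin n) K)) -
            DualNumber.eps * inl (evalP ![X, Y] q)) *
          ((inl Y : DualNumber (Matrix (Fin n) (Fin n) K)) -
            DualNumber.eps * inl (evalP ![X, Y] p)) -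
        ((inl Y : DualNumber (Matrix (Fin n) (Fin n) K)) -
            DualNumber.eps * inl (evalP ![X, Y] p)) *
          ((inl X : DualNumber (Matrix (Fin n) (Fin n) K)) -
            DualNumber.eps * inl (evalP ![X, Y] q)) =
      (inl X : DualNumber (Matrix (Fin n) (Fin n) K)) * inl Y -
        (inl Y : DualNumber (Matrix (Fin n) (Fin n) K)) * inl X) := by
  classical
  have hij : (0 : Fin 2) ≠ 1 := by decide
  have hiota := iota_eq_neg hij hα hpq
  -- the commutator identity, valid for arbitrary X Y
  have hstar : ∀ X Y : Matrix (Fin n) (Fin n) K,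
      X * evalP ![X, Y] p - Y * evalP ![X, Y] q =
        evalP ![X, Y] p * X - evalP ![X, Y] q * Y := by
    intro X Y
    have e1 : evalP ![X, Y] (NP α) = X * evalP ![X, Y] p - Y * evalP ![X, Y] q := by
      rw [hpq, evalP_sub, evalP_cons, evalP_cons]
      simp
    have hsn : NP α = snocP 0 p - snocP 1 q := by
      conv_lhs => rw [← rotP_NP α, hpq]
      rw [map_sub, rotP_cons, rotP_cons]
    have e2 : evalP ![X, Y] (NP α) = evalP ![X, Y] p * X - evalP ![X, Y] q * Y := by
      rw [hsn, evalP_sub, evalP_snoc, evalP_snoc]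
      simp
    exact e1.symm.trans e2
  -- the tangency statement, for a general matrix J intertwining as in 𝔰𝔭 (J = 1 gives 𝔰𝔬)
  have hmemb : ∀ (J X Y : Matrix (Fin n) (Fin n) K),
      J * X = -Xᵀ * J → J * Y = -Yᵀ * J →
      J * evalP ![X, Y] p = -(evalP ![X, Y] p)ᵀ * J ∧
      J * evalP ![X, Y] q = -(evalP ![X, Y] q)ᵀ * J := by
    intro J X Y hX hY
    have hJ : ∀ i : Fin 2, J * (![X, Y] i) = -(![X, Y] i)ᵀ * J := by
      intro i
      fin_cases i
      · simpa using hX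
      · simpa using hY
    constructor
    · have h1 := J_eval J ![X, Y] hJ p
      rw [hiota.1, evalP_neg, Matrix.transpose_neg] at h1
      exact h1
    · have h1 := J_eval J ![X, Y] hJ q
      rw [hiota.2, evalP_neg, Matrix.transpose_neg] at h1
      exact h1
  constructor
  · intro X Y hX hY
    have hX' : (1 : Matrix (Fin n) (Fin n) K) * X = -Xᵀ * 1 := by
      rw [one_mul, mul_one, hX, neg_neg]
    have hY' : (1 : Matrix (Fin n) (Fin n) K) * Y = -Yᵀ * 1 := by
      rw [one_mul, mul_one, hY, neg_neg]
    obtain ⟨hp1, hq1⟩ := hmemb 1 X Y hX' hY'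
    rw [one_mul, mul_one] at hp1 hq1
    refine ⟨?_, ?_, dual_commutator X Y (evalP ![X, Y] p) (evalP ![X, Y] q) (hstar X Y)⟩
    · have h' := congrArg Matrix.transpose hp1
      simpa using h'
    · have h' := congrArg Matrix.transpose hq1
      simpa using h'
  · intro J _hJalt _hJunit X Y hX hY
    obtain ⟨hp1, hq1⟩ := hmemb J X Y hX hY
    exact ⟨hp1, hq1, dual_commutator X Y (evalP ![X, Y] p) (evalP ![X, Y] q) (hstar X Y)⟩

end
end
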